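/- arXiv:2301.09358 — 4 statements merged into one kernel-verified Lean document; each statement's English description precedes it below -/
import Mathlib

section
/- Let F : ℂ[X] → ℂ be a linear functional with F(1) = 1, and suppose there exists r > 0 such that F((X - α)^n) ≠ 0 for all n ≥ 1 and all α ∈ ℂ with |α| ≥ r. Then there exists w ∈ ℂ with |w| < r such that F(p) = p(w) for every polynomial p. -/
/-!
Translating by `w = F X` (a Taylor shift, which moves the radius to `r + ‖w‖`) reduces the claim
to `F X = 0` and `F (X ^ k) = 0` for `k ≥ 1`. The polynomial `Q_n(x) = F ((x - X) ^ n)` is monic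
of degree `n`, its roots lie in the disc `‖β‖ < r`, and by Vieta the `j`-th elementary symmetric
function of its roots is `(n choose j) * F (X ^ j)`. If the moments of order `1, …, k - 1`
vanish, Newton's identities give `p_k = ± k (n choose k) F (X ^ k)` for the `k`-th power sum of
the roots, while `‖p_k‖ ≤ n r ^ k`. Hence `(n - 1 choose k - 1) ‖F (X ^ k)‖ ≤ r ^ k` for all `n`,
which for `k ≥ 2` forces `F (X ^ k) = 0`.
-/

open Polynomial Finset Filter Nat

theorem Multiset.sum_map_pow_eq_of_esymm_eq_zero {R : Type*} [CommRing R] (s : Multiset R)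
    {k : ℕ} (hk : 0 < k) (h : ∀ j, 0 < j → j < k → s.esymm j = 0) :
    (s.map (· ^ k)).sum = (-1) ^ (k + 1) * k * s.esymm k := by
  obtain ⟨l, rfl⟩ : ∃ l : List R, (l : Multiset R) = s := ⟨s.toList, s.coe_toList⟩
  have hl : (univ.val.map l.get : Multiset R) = l := by
    rw [Fin.univ_val_map, List.ofFn_get]
  have newton := congrArg (MvPolynomial.aeval l.get)
    (MvPolynomial.psum_eq_mul_esymm_sub_sum (Fin l.length) R k hk)
  simp only [MvPolynomial.psum, map_sub, map_mul, map_pow, map_sum, map_neg, map_one,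
    map_natCast, MvPolynomial.aeval_esymm_eq_multiset_esymm, MvPolynomial.aeval_X, hl] at newton
  rw [← hl, Multiset.map_map, ← Finset.sum_eq_multiset_sum, Function.comp_def, newton, hl,
    sub_eq_self]
  refine Finset.sum_eq_zero fun a ha => ?_
  obtain ⟨-, hpos, hlt⟩ := Finset.mem_filter.mp ha
  rw [h a.1 hpos hlt, mul_zero, zero_mul]

theorem Multiset.norm_sum_map_pow_le {E : Type*} [SeminormedRing E] [NormOneClass E]
    (s : Multiset E) {r : ℝ} (h : ∀ x ∈ s, ‖x‖ ≤ r) (k : ℕ) :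
    ‖(s.map (· ^ k)).sum‖ ≤ Multiset.card s * r ^ k := by
  refine (norm_multiset_sum_le _).trans ?_
  rw [Multiset.map_map, ← nsmul_eq_mul]
  refine (Multiset.sum_le_card_nsmul _ _ fun y hy => ?_).trans_eq (by rw [Multiset.card_map])
  obtain ⟨x, hx, rfl⟩ := Multiset.mem_map.mp hy
  exact (norm_pow_le x k).trans (pow_le_pow_left₀ (norm_nonneg x) (h x hx) k)

theorem Nat.tendsto_choose_atTop {j : ℕ} (hj : j ≠ 0) :
    Tendsto (fun m : ℕ => (m.choose j : ℝ)) atTop atTop := by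
  have hlin : Tendsto (fun m : ℕ => ((m + 1 - j : ℕ) : ℝ) / j !) atTop atTop :=
    (tendsto_natCast_atTop_atTop.comp (tendsto_sub_atTop_nat j |>.comp
      (tendsto_add_atTop_nat 1))).atTop_div_const (by positivity)
  refine tendsto_atTop_mono (fun m => ?_) hlin
  refine le_trans ?_ (Nat.pow_le_choose j m)
  gcongr
  exact_mod_cast Nat.le_self_pow hj _

theorem nonpos_of_eventually_mul_choose_le {a B : ℝ} {j : ℕ} (hj : j ≠ 0)
    (h : ∀ᶠ m : ℕ in atTop, a * m.choose j ≤ B) : a ≤ 0 := by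
  by_contra! ha
  have hlarge := ((Nat.tendsto_choose_atTop hj).const_mul_atTop ha).eventually_gt_atTop B
  obtain ⟨m, hle, hgt⟩ := (h.and hlarge).exists
  exact hle.not_gt hgt

namespace Polynomial

theorem eq_leval_of_map_X_pow {R : Type*} [CommSemiring R] {F : R[X] →ₗ[R] R} {a : R}
    (h : ∀ k, F (X ^ k) = a ^ k) : F = leval a :=
  lhom_ext' fun k => LinearMap.ext_ring <| by simp [monomial_one_right_eq_X_pow, h]

theorem map_C_of_map_one {R : Type*} [CommSemiring R] {F : R[X] →ₗ[R] R}
    (hF1 : F 1 = 1) (a : R) : F (C a) = a := by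
  rw [← mul_one (C a), ← smul_eq_C_mul, map_smul, hF1, smul_eq_mul, mul_one]

theorem taylor_X_sub_C {R : Type*} [CommRing R] (a b : R) :
    taylor a (X - C b) = X - C (b - a) := by
  rw [map_sub, taylor_X, taylor_C, map_sub]
  ring

section MomentPoly

variable {R : Type*} [CommRing R] (F : R[X] →ₗ[R] R)

noncomputable def momentPoly (n : ℕ) : R[X] :=
  ∑ k ∈ range (n + 1), C ((-1) ^ k * n.choose k * F (X ^ k)) * X ^ (n - k)

theorem eval_momentPoly (n : ℕ) (a : R) : (momentPoly F n).eval a = F ((C a - X) ^ n) := by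
  rw [sub_eq_neg_add, add_pow, map_sum, momentPoly, eval_finsetSum]
  refine sum_congr rfl fun k _ => ?_
  have hterm : (-X) ^ k * C a ^ (n - k) * (n.choose k : R[X])
      = ((-1) ^ k * n.choose k * a ^ (n - k)) • (X ^ k : R[X]) := by
    simp only [smul_eq_C_mul, map_mul, map_pow, map_neg, map_one, map_natCast]
    ring
  rw [hterm, map_smul, smul_eq_mul, eval_C_mul, eval_X_pow]
  ring

theorem coeff_momentPoly {n j : ℕ} (hj : j ≤ n) :
    (momentPoly F n).coeff (n - j) = (-1) ^ j * n.choose j * F (X ^ j) := by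
  rw [momentPoly, finsetSum_coeff, sum_eq_single j]
  · rw [coeff_C_mul_X_pow, if_pos rfl]
  · intro k hk hkj
    rw [coeff_C_mul_X_pow, if_neg (by grind)]
  · intro h
    exact absurd (mem_range.mpr (by omega)) h

theorem natDegree_momentPoly_le (n : ℕ) : (momentPoly F n).natDegree ≤ n :=
  natDegree_sum_le_of_forall_le _ _ fun _ _ => (natDegree_C_mul_X_pow_le _ _).trans (Nat.sub_le _ _)

variable {F}

theorem coeff_momentPoly_self (hF1 : F 1 = 1) (n : ℕ) : (momentPoly F n).coeff n = 1 := by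
  simpa [hF1] using coeff_momentPoly F (Nat.zero_le n)

theorem monic_momentPoly (hF1 : F 1 = 1) (n : ℕ) : (momentPoly F n).Monic :=
  monic_of_natDegree_le_of_coeff_eq_one n (natDegree_momentPoly_le F n)
    (coeff_momentPoly_self hF1 n)

theorem natDegree_momentPoly [Nontrivial R] (hF1 : F 1 = 1) (n : ℕ) :
    (momentPoly F n).natDegree = n :=
  natDegree_eq_of_le_of_coeff_ne_zero (natDegree_momentPoly_le F n)
    ((coeff_momentPoly_self hF1 n).trans_ne one_ne_zero)

theorem map_X_sub_C_pow_eq_zero_of_mem_roots [IsDomain R] (hF1 : F 1 = 1) {n : ℕ} {β : R}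
    (hβ : β ∈ (momentPoly F n).roots) : F ((X - C β) ^ n) = 0 := by
  have hroot := (mem_roots (monic_momentPoly hF1 n).ne_zero).mp hβ
  rw [IsRoot, eval_momentPoly] at hroot
  rw [← neg_sub, neg_pow, ← C_1, ← C_neg, ← C_pow, ← smul_eq_C_mul, map_smul, hroot, smul_zero]

end MomentPoly

theorem esymm_roots_momentPoly {K : Type*} [Field K] [IsAlgClosed K] {F : K[X] →ₗ[K] K}
    (hF1 : F 1 = 1) {n j : ℕ} (hj : j ≤ n) :
    (momentPoly F n).roots.esymm j = n.choose j * F (X ^ j) := by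
  have vieta := coeff_eq_esymm_roots_of_splits (IsAlgClosed.splits (momentPoly F n))
    (k := n - j) ((Nat.sub_le n j).trans_eq (natDegree_momentPoly hF1 n).symm)
  rw [coeff_momentPoly F hj, (monic_momentPoly hF1 n).leadingCoeff, natDegree_momentPoly hF1,
    Nat.sub_sub_self hj, one_mul, mul_assoc] at vieta
  exact mul_left_cancel₀ (pow_ne_zero j (neg_ne_zero.mpr one_ne_zero)) vieta |>.symm

end Polynomial

section Centered

variable {F : ℂ[X] →ₗ[ℂ] ℂ} {r : ℝ} (hF1 : F 1 = 1)
  (hF : ∀ n : ℕ, 1 ≤ n → ∀ α : ℂ, r ≤ ‖α‖ → F ((X - C α) ^ n) ≠ 0)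
include hF1 hF

theorem norm_lt_of_mem_roots_momentPoly {n : ℕ} (hn : 1 ≤ n) {β : ℂ}
    (hβ : β ∈ (momentPoly F n).roots) : ‖β‖ < r :=
  not_le.mp fun h => hF n hn β h (map_X_sub_C_pow_eq_zero_of_mem_roots hF1 hβ)

theorem mul_choose_mul_norm_map_X_pow_le {k n : ℕ} (hk : 0 < k) (hkn : k ≤ n)
    (hlow : ∀ j, 0 < j → j < k → F (X ^ j) = 0) :
    k * n.choose k * ‖F (X ^ k)‖ ≤ n * r ^ k := by
  set s := (momentPoly F n).roots
  have hcard : Multiset.card s = n := by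
    rw [splits_iff_card_roots.mp (IsAlgClosed.splits _), natDegree_momentPoly hF1]
  have hpow := s.sum_map_pow_eq_of_esymm_eq_zero hk fun j hj hjk => by
    rw [esymm_roots_momentPoly hF1 (by omega), hlow j hj hjk, mul_zero]
  have hbound := s.norm_sum_map_pow_le
    (fun β hβ => (norm_lt_of_mem_roots_momentPoly hF1 hF (by omega) hβ).le) k
  rw [hpow, esymm_roots_momentPoly hF1 hkn, hcard] at hbound
  simpa [mul_assoc] using hbound

theorem map_X_pow_eq_zero_of_map_X_eq_zero (hFX : F X = 0) {k : ℕ} (hk : 0 < k) :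
    F (X ^ k) = 0 := by
  induction k using Nat.strong_induction_on with
  | _ k ih =>
  rcases k with _ | _ | j
  · exact absurd hk (lt_irrefl 0)
  · rwa [zero_add, pow_one]
  have hlow : ∀ i, 0 < i → i < j + 2 → F (X ^ i) = 0 := fun i hi hij => ih i hij hi
  have hbound : ∀ᶠ m : ℕ in atTop, ‖F (X ^ (j + 2))‖ * m.choose (j + 1) ≤ r ^ (j + 2) := by
    filter_upwards [eventually_ge_atTop (j + 1)] with m hm
    have h := mul_choose_mul_norm_map_X_pow_le hF1 hF (n := m + 1) (by omega) (by omega) hlow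
    have hchoose : ((j + 2 : ℕ) : ℝ) * ((m + 1).choose (j + 2) : ℕ)
        = (m + 1 : ℕ) * m.choose (j + 1) := by
      exact_mod_cast (mul_comm _ _).trans (Nat.add_one_mul_choose_eq m (j + 1)).symm
    rw [hchoose, mul_assoc] at h
    rw [mul_comm ‖_‖]
    exact le_of_mul_le_mul_left h (by positivity)
  exact norm_eq_zero.mp <| le_antisymm
    (nonpos_of_eventually_mul_choose_le (by omega) hbound) (norm_nonneg _)

theorem eq_leval_zero_of_map_X_eq_zero (hFX : F X = 0) : F = leval 0 :=
  eq_leval_of_map_X_pow fun k => by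
    rcases k.eq_zero_or_pos with rfl | hk
    · rw [pow_zero, pow_zero, hF1]
    · rw [zero_pow hk.ne', map_X_pow_eq_zero_of_map_X_eq_zero hF1 hF hFX hk]

theorem eq_leval_map_X : F = leval (F X) := by
  set w := F X
  have hcentered : F ∘ₗ taylor (-w) = leval 0 := by
    refine eq_leval_zero_of_map_X_eq_zero (r := r + ‖w‖) (by simp [hF1]) (fun n hn α hα => ?_) ?_
    · have hα' : r ≤ ‖α - -w‖ := by linarith [norm_sub_norm_le α (-w), norm_neg w]
      simpa [taylor_X_sub_C] using hF n hn _ hα'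
    · simp [taylor_X, map_C_of_map_one hF1, w]
  refine LinearMap.ext fun p => ?_
  calc F p = (F ∘ₗ taylor (-w)) (taylor w p) := by simp [taylor_taylor]
    _ = p.eval w := by rw [hcentered, leval_apply, taylor_eval, zero_add]

end Centered

theorem gkz_polynomials_general (F : Polynomial ℂ →ₗ[ℂ] ℂ) (hF1 : F 1 = 1)
    (r : ℝ)
    (hF : ∀ n : ℕ, 1 ≤ n → ∀ α : ℂ, r ≤ ‖α‖ → F ((X - C α) ^ n) ≠ 0) :
    ∃ w : ℂ, ‖w‖ < r ∧ ∀ p : Polynomial ℂ, F p = p.eval w := by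
  have hw : ‖F X‖ < r := not_le.mp fun h => hF 1 le_rfl (F X) h <| by
    rw [pow_one, map_sub, map_C_of_map_one hF1, sub_self]
  exact ⟨F X, hw, LinearMap.congr_fun (eq_leval_map_X hF1 hF)⟩

/-- GKZ theorem for polynomials: a linear functional on ℂ[X] with F(1)=1 that is
nonzero on all powers (X-α)^n with |α| ≥ r is a point evaluation at some |w| < r. -/
theorem gkz_polynomials (F : Polynomial ℂ →ₗ[ℂ] ℂ) (hF1 : F 1 = 1)
    (r : ℝ) (hr : 0 < r)
    (hF : ∀ n : ℕ, 1 ≤ n → ∀ α : ℂ, r ≤ ‖α‖ → F ((X - C α) ^ n) ≠ 0) :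
    ∃ w : ℂ, ‖w‖ < r ∧ ∀ p : Polynomial ℂ, F p = p.eval w :=
  gkz_polynomials_general F hF1 r hF
end

section
/- Let F : ℂ[X] → ℂ be a linear functional with F(1) = 1, and suppose there exists r > 0 such that F((X - α)^n) ≠ 0 for all n ≥ 1 and all α ∈ ℂ with |α| ≥ r. Then F(X^k) = (F(X))^k for every natural number k. -/
/-!
For `n ≥ 1` the polynomial `p_n(α) = F((α - X)^n)` is monic of degree `n`, and by Vieta the
`j`-th elementary symmetric function of its roots is `(n choose j) • F(X^j)`; the hypothesis on `F`
puts all these roots in the disc `‖z‖ < r`. Replacing `F` by `p ↦ F(p(X - F X))` we may assume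
`F X = 0`, so the roots of every `p_n` sum to zero. In Newton's identity for `k • e_k` the term
carrying the first power sum then vanishes, which bounds `e_k` of `n` numbers of size `≤ r` by
`O(n^(k-1))`, while `e_k = (n choose k) • F(X^k)` has size `≍ n^k ‖F(X^k)‖`. Letting `n → ∞` gives
`F(X^k) = 0` for `k ≥ 1`: the shifted functional is evaluation at `0`, whence `F(X^k) = F(X)^k`.
-/

open Polynomial Finset
open scoped Nat

theorem Multiset.esymm_one {R : Type*} [CommSemiring R] (s : Multiset R) :
    s.esymm 1 = s.sum := by
  simp [esymm, powersetCard_one]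

theorem Multiset.mul_esymm_eq_sum {R : Type*} [CommRing R] (s : Multiset R) (k : ℕ) :
    k * s.esymm k = (-1) ^ (k + 1) * ∑ a ∈ HasAntidiagonal.antidiagonal k with a.1 < k,
      (-1) ^ a.1 * s.esymm a.1 * (s.map (· ^ a.2)).sum := by
  classical
  have h := congrArg (MvPolynomial.aeval fun x : s.ToType => (x : R))
    (MvPolynomial.mul_esymm_eq_sum s.ToType R k)
  simp only [map_mul, map_pow, map_natCast, map_sum, map_neg, map_one,
    MvPolynomial.aeval_esymm_eq_multiset_esymm, MvPolynomial.psum, MvPolynomial.aeval_X,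
    Multiset.map_univ_coe] at h
  convert h using 5 with a
  rw [Finset.sum_eq_multiset_sum, Multiset.map_univ s (· ^ a.2)]

namespace Multiset

variable {𝕜 : Type*} [NormedField 𝕜] {s : Multiset 𝕜} {r : ℝ}

theorem norm_prod_le_pow_card (hs : ∀ z ∈ s, ‖z‖ ≤ r) : ‖s.prod‖ ≤ r ^ card s := by
  change normHom s.prod ≤ _
  rw [map_multiset_prod]
  exact prod_map_le_pow_card (fun z _ => norm_nonneg (E := 𝕜) z) hs

theorem norm_esymm_le (hs : ∀ z ∈ s, ‖z‖ ≤ r) (j : ℕ) :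
    ‖s.esymm j‖ ≤ (card s).choose j * r ^ j := by
  refine (norm_multiset_sum_le _).trans ((sum_le_card_nsmul _ (r ^ j) fun x hx => ?_).trans_eq ?_)
  · obtain ⟨t, ht, rfl⟩ := mem_map.mp (map_map _ _ _ ▸ hx)
    rw [mem_powersetCard] at ht
    rw [Function.comp_apply, ← ht.2]
    exact norm_prod_le_pow_card fun z hz => hs z (mem_of_le ht.1 hz)
  · simp

theorem norm_sum_map_pow_le_s1 (hs : ∀ z ∈ s, ‖z‖ ≤ r) (i : ℕ) :
    ‖(s.map (· ^ i)).sum‖ ≤ card s * r ^ i := by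
  refine (norm_multiset_sum_le _).trans ((sum_le_card_nsmul _ (r ^ i) fun x hx => ?_).trans_eq ?_)
  · obtain ⟨z, hz, rfl⟩ := mem_map.mp (map_map _ _ _ ▸ hx)
    rw [Function.comp_apply, norm_pow]
    exact pow_le_pow_left₀ (norm_nonneg z) (hs z hz) i
  · simp

end Multiset

theorem Multiset.norm_esymm_le_of_sum_eq_zero {𝕜 : Type*} [RCLike 𝕜] {s : Multiset 𝕜} {r : ℝ}
    (hr : 0 ≤ r) (hs : ∀ z ∈ s, ‖z‖ ≤ r) (hsum : s.sum = 0) {k : ℕ} (hk : 1 ≤ k) :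
    ‖s.esymm k‖ ≤ (k + 1) * card s ^ (k - 1) * r ^ k := by
  obtain rfl | hs0 := eq_or_ne s 0
  · have h0 := norm_esymm_le hs k
    rw [card_zero, Nat.choose_eq_zero_of_lt hk, Nat.cast_zero, zero_mul] at h0
    exact h0.trans (by positivity)
  have hn : (1 : ℝ) ≤ card s := by exact_mod_cast card_pos.mpr hs0
  have hterm : ∀ a ∈ {a ∈ HasAntidiagonal.antidiagonal k | a.1 < k},
      ‖(-1) ^ a.1 * s.esymm a.1 * (s.map (· ^ a.2)).sum‖ ≤ card s ^ (k - 1) * r ^ k := by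
    intro a ha
    rw [Finset.mem_filter, HasAntidiagonal.mem_antidiagonal] at ha
    -- The power sum `∑ z` vanishes, so the surviving terms have `a.1 ≤ k - 2`.
    obtain h1 | h2 : a.2 = 1 ∨ 2 ≤ a.2 := by omega
    · simp only [h1, pow_one, map_id', hsum, mul_zero, norm_zero]
      positivity
    calc _ = ‖s.esymm a.1‖ * ‖(s.map (· ^ a.2)).sum‖ := by simp
      _ ≤ ((card s).choose a.1 * r ^ a.1) * (card s * r ^ a.2) := by
        gcongr
        · exact norm_esymm_le hs a.1
        · exact norm_sum_map_pow_le_s1 hs a.2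
      _ ≤ (card s ^ a.1 * r ^ a.1) * (card s * r ^ a.2) := by
        gcongr
        exact_mod_cast Nat.choose_le_pow _ _
      _ = card s ^ (a.1 + 1) * r ^ k := by rw [← ha.1]; ring
      _ ≤ card s ^ (k - 1) * r ^ k := by
        gcongr
        omega
  calc ‖s.esymm k‖ ≤ k * ‖s.esymm k‖ := le_mul_of_one_le_left (norm_nonneg _) (mod_cast hk)
    _ = ‖(k : 𝕜) * s.esymm k‖ := by rw [norm_mul, RCLike.norm_natCast]
    _ ≤ ∑ a ∈ HasAntidiagonal.antidiagonal k with a.1 < k, (card s : ℝ) ^ (k - 1) * r ^ k := by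
      rw [mul_esymm_eq_sum, norm_mul, norm_pow, norm_neg, norm_one, one_pow, one_mul]
      exact norm_sum_le_of_le _ hterm
    _ ≤ (k + 1) * card s ^ (k - 1) * r ^ k := by
      rw [sum_const, nsmul_eq_mul, mul_assoc]
      gcongr
      exact_mod_cast (card_filter_le _ _).trans (Nat.card_antidiagonal k).le

theorem Nat.half_pow_div_factorial_le_choose {n k : ℕ} (h : 2 * k ≤ n) :
    ((n : ℝ) / 2) ^ k / k ! ≤ n.choose k := by
  refine le_trans ?_ (Nat.pow_le_choose k n)
  gcongr
  rw [Nat.cast_sub (by omega), Nat.cast_add_one]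
  have : (2 * k : ℝ) ≤ n := by exact_mod_cast h
  linarith

theorem le_div_of_choose_mul_le {n k : ℕ} {x c : ℝ} (hk : 1 ≤ k) (hn : 2 * k ≤ n) (hx : 0 ≤ x)
    (h : n.choose k * x ≤ c * n ^ (k - 1)) : x ≤ 2 ^ k * k ! * c / n := by
  have hpos : (0 : ℝ) < n := by exact_mod_cast (show 0 < n by omega)
  have hpow : (n : ℝ) ^ k = n ^ (k - 1) * n := by rw [← pow_succ, Nat.sub_add_cancel hk]
  rw [le_div_iff₀ hpos]
  refine le_of_mul_le_mul_left ?_ (pow_pos hpos (k - 1))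
  calc (n : ℝ) ^ (k - 1) * (x * n) = ((n : ℝ) / 2) ^ k / k ! * x * (2 ^ k * k !) := by
        rw [div_pow, hpow]
        field_simp
    _ ≤ c * n ^ (k - 1) * (2 ^ k * k !) := by
        refine mul_le_mul_of_nonneg_right ?_ (by positivity)
        exact (mul_le_mul_of_nonneg_right (Nat.half_pow_div_factorial_le_choose hn) hx).trans h
    _ = n ^ (k - 1) * (2 ^ k * k ! * c) := by ring

section GKZPoly

variable {K : Type*} [CommRing K] (F : K[X] →ₗ[K] K) (n : ℕ)

noncomputable def gkzPoly : K[X] :=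
  ∑ j ∈ range (n + 1), C ((-1) ^ j * n.choose j * F (X ^ j)) * X ^ (n - j)

theorem eval_gkzPoly (α : K) : (gkzPoly F n).eval α = F ((C α - X) ^ n) := by
  rw [sub_eq_neg_add, add_pow, map_sum, gkzPoly, eval_finsetSum]
  refine sum_congr rfl fun j _ => ?_
  have hterm : (-X) ^ j * C α ^ (n - j) * (n.choose j : K[X]) =
      ((-1) ^ j * α ^ (n - j) * n.choose j) • X ^ j := by
    rw [smul_eq_C_mul]
    simp only [map_mul, map_pow, map_neg, map_one, map_natCast]
    ring
  rw [hterm, map_smul, smul_eq_mul]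
  simp only [eval_mul, eval_C, eval_pow, eval_X]
  ring

theorem coeff_gkzPoly {j : ℕ} (hj : j ≤ n) :
    (gkzPoly F n).coeff (n - j) = (-1) ^ j * n.choose j * F (X ^ j) := by
  rw [gkzPoly, finsetSum_coeff, sum_eq_single j]
  · rw [coeff_C_mul_X_pow, if_pos rfl]
  · intro i hi hij
    rw [coeff_C_mul_X_pow, if_neg]
    rw [mem_range] at hi
    omega
  · intro hj'
    exact absurd (mem_range.mpr (Nat.lt_succ_of_le hj)) hj'

theorem natDegree_gkzPoly_le : (gkzPoly F n).natDegree ≤ n :=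
  natDegree_sum_le_of_forall_le _ _ fun _ _ => (natDegree_C_mul_X_pow_le _ _).trans (Nat.sub_le _ _)

variable {F}

theorem coeff_gkzPoly_self (hF1 : F 1 = 1) : (gkzPoly F n).coeff n = 1 := by
  simpa [hF1] using coeff_gkzPoly F n n.zero_le

theorem monic_gkzPoly (hF1 : F 1 = 1) : (gkzPoly F n).Monic :=
  monic_of_natDegree_le_of_coeff_eq_one n (natDegree_gkzPoly_le F n) (coeff_gkzPoly_self n hF1)

theorem natDegree_gkzPoly [Nontrivial K] (hF1 : F 1 = 1) : (gkzPoly F n).natDegree = n :=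
  natDegree_eq_of_le_of_coeff_ne_zero (natDegree_gkzPoly_le F n)
    (by rw [coeff_gkzPoly_self n hF1]; exact one_ne_zero)

end GKZPoly

section GKZPolyRoots

variable {K : Type*} [Field K] [IsAlgClosed K] {F : K[X] →ₗ[K] K} (n : ℕ)

theorem card_roots_gkzPoly (hF1 : F 1 = 1) : Multiset.card (gkzPoly F n).roots = n :=
  (splits_iff_card_roots.mp (IsAlgClosed.splits _)).trans (natDegree_gkzPoly n hF1)

theorem esymm_roots_gkzPoly (hF1 : F 1 = 1) {j : ℕ} (hj : j ≤ n) :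
    (gkzPoly F n).roots.esymm j = n.choose j * F (X ^ j) := by
  have h := coeff_eq_esymm_roots_of_card
    ((card_roots_gkzPoly n hF1).trans (natDegree_gkzPoly n hF1).symm)
    ((Nat.sub_le n j).trans (natDegree_gkzPoly n hF1).ge)
  rw [(monic_gkzPoly n hF1).leadingCoeff, natDegree_gkzPoly n hF1, Nat.sub_sub_self hj,
    coeff_gkzPoly F n hj, one_mul, mul_assoc] at h
  exact (mul_left_cancel₀ (pow_ne_zero _ (neg_ne_zero.mpr one_ne_zero)) h).symm

end GKZPolyRoots

theorem norm_lt_of_mem_roots_gkzPoly {F : ℂ[X] →ₗ[ℂ] ℂ} (hF1 : F 1 = 1) {n : ℕ} {r : ℝ}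
    (hF : ∀ α : ℂ, r ≤ ‖α‖ → F ((X - C α) ^ n) ≠ 0) {z : ℂ} (hz : z ∈ (gkzPoly F n).roots) :
    ‖z‖ < r := by
  by_contra! hzr
  have hroot : F ((C z - X) ^ n) = 0 := by
    rw [← eval_gkzPoly]
    exact (mem_roots (monic_gkzPoly n hF1).ne_zero).mp hz
  rw [← neg_sub, neg_pow, show (-1 : ℂ[X]) ^ n = C ((-1) ^ n) by simp, ← smul_eq_C_mul,
    map_smul, smul_eq_mul] at hroot
  exact hF z hzr ((mul_eq_zero.mp hroot).resolve_left (pow_ne_zero _ (by norm_num)))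

theorem Polynomial.eq_leval_zero_of_map_X_pow_eq_zero {R : Type*} [CommSemiring R]
    {G : R[X] →ₗ[R] R} (hG1 : G 1 = 1) (hGX : ∀ k, 1 ≤ k → G (X ^ k) = 0) : G = leval 0 := by
  refine lhom_ext' fun n => LinearMap.ext_ring ?_
  cases n with
  | zero => simp [hG1]
  | succ n => simp [← X_pow_eq_monomial, hGX]

theorem Polynomial.eq_leval_zero_of_map_X_eq_zero {F : ℂ[X] →ₗ[ℂ] ℂ} (hF1 : F 1 = 1)
    (hFX : F X = 0) {r : ℝ} (hr : 0 ≤ r)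
    (hF : ∀ n : ℕ, 1 ≤ n → ∀ α : ℂ, r ≤ ‖α‖ → F ((X - C α) ^ n) ≠ 0) : F = leval 0 := by
  refine eq_leval_zero_of_map_X_pow_eq_zero hF1 fun k hk => norm_le_zero_iff.mp ?_
  refine ge_of_tendsto (tendsto_const_div_atTop_nhds_zero_nat (2 ^ k * k ! * ((k + 1) * r ^ k)))
    (Filter.eventually_atTop.mpr ⟨2 * k, fun n hn => ?_⟩)
  set s := (gkzPoly F n).roots
  have hs : ∀ z ∈ s, ‖z‖ ≤ r := fun z hz =>
    (norm_lt_of_mem_roots_gkzPoly hF1 (hF n (by omega)) hz).le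
  have hsum : s.sum = 0 := by
    rw [← Multiset.esymm_one, esymm_roots_gkzPoly n hF1 (by omega), pow_one, hFX, mul_zero]
  have hest := s.norm_esymm_le_of_sum_eq_zero hr hs hsum hk
  rw [esymm_roots_gkzPoly n hF1 (by omega), norm_mul, Complex.norm_natCast,
    card_roots_gkzPoly n hF1, mul_right_comm] at hest
  exact le_div_of_choose_mul_le hk hn (norm_nonneg _) hest

/-- Multiplicativity on monomials: under the GKZ hypotheses, F(X^k) = (F X)^k. -/
theorem gkz_monomials (F : Polynomial ℂ →ₗ[ℂ] ℂ) (hF1 : F 1 = 1)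
    (r : ℝ) (hr : 0 < r)
    (hF : ∀ n : ℕ, 1 ≤ n → ∀ α : ℂ, r ≤ ‖α‖ → F ((X - C α) ^ n) ≠ 0) :
    ∀ k : ℕ, F (X ^ k) = (F X) ^ k := by
  intro k
  set γ := F X
  set G := F ∘ₗ (aeval (X - C γ)).toLinearMap
  have hG : G = leval 0 := by
    refine eq_leval_zero_of_map_X_eq_zero (r := r + ‖γ‖) ?_ ?_ (by positivity) fun n hn α hα => ?_
    · simp [G, hF1]
    · have hFC : F (C γ) = γ := by
        rw [← mul_one (C γ), ← smul_eq_C_mul, map_smul, hF1, smul_eq_mul, mul_one]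
      simp only [G, LinearMap.comp_apply, AlgHom.toLinearMap_apply, aeval_X, map_sub, hFC]
      exact sub_self γ
    · have hshift : aeval (X - C γ) ((X - C α) ^ n) = (X - C (γ + α)) ^ n := by
        simp only [map_pow, map_sub, aeval_X, aeval_C, algebraMap_eq, map_add]
        ring
      simp only [G, LinearMap.comp_apply, AlgHom.toLinearMap_apply, hshift]
      refine hF n hn _ ?_
      have := norm_sub_le (γ + α) γ
      rw [add_sub_cancel_left] at this
      linarith
  calc F (X ^ k) = G ((X + C γ) ^ k) := by simp [G]
    _ = γ ^ k := by simp [hG]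
end

section
/- Let λ_1, …, λ_n be complex numbers with |λ_i| < r for all i, and let k ≤ n. Then |(Σ_{i=1}^n λ_i)^k − k!·e_k(λ_1,…,λ_n)| ≤ k!·(C(n+k-1, n-1) − C(n,k))·r^k, where e_k is the k-th elementary symmetric polynomial. -/
open Finset

/-- The sum of `∏ i, l (p i)` over injective `p : Fin k → Fin n` equals
`k! * e_k(l)`. -/
lemma sum_injective_eq_factorial_mul_esymm (n k : ℕ) (l : Fin n → ℂ) :
    ∑ p ∈ Finset.univ.filter (fun p : Fin k → Fin n => Function.Injective p),
        ∏ i, l (p i)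
      = (k.factorial : ℂ) *
        ∑ s ∈ Finset.powersetCard k Finset.univ, ∏ i ∈ s, l i := by
  classical
  have hmaps : ∀ p ∈ Finset.univ.filter (fun p : Fin k → Fin n => Function.Injective p),
      Finset.image p Finset.univ ∈ Finset.powersetCard k (Finset.univ : Finset (Fin n)) := by
    intro p hp
    rw [Finset.mem_filter] at hp
    rw [Finset.mem_powersetCard_univ, Finset.card_image_of_injective _ hp.2, Finset.card_fin]
  rw [← Finset.sum_fiberwise_of_maps_to hmaps (fun p => ∏ i, l (p i)), Finset.mul_sum]
  refine Finset.sum_congr rfl fun s hs => ?_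
  have hcard : s.card = k := (Finset.mem_powersetCard_univ.mp hs)
  have hterm : ∀ p ∈ (Finset.univ.filter
      (fun p : Fin k → Fin n => Function.Injective p)).filter
      (fun p => Finset.image p Finset.univ = s), ∏ i, l (p i) = ∏ i ∈ s, l i := by
    intro p hp
    rw [Finset.mem_filter, Finset.mem_filter] at hp
    rw [← hp.2, Finset.prod_image (fun a _ b _ h => hp.1.2 h)]
  rw [Finset.sum_congr rfl hterm, Finset.sum_const, nsmul_eq_mul]
  congr 1
  -- fiber cardinality is k!
  have hbij : ((Finset.univ.filter (fun p : Fin k → Fin n => Function.Injective p)).filter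
      (fun p => Finset.image p Finset.univ = s)).card
      = (Finset.univ : Finset (Fin k ≃ {x // x ∈ s})).card := by
    refine Finset.card_bij'
      (fun p hp => ?_) (fun e _ => fun i => (e i : Fin n)) ?_ ?_ ?_ ?_
    · -- forward map
      rw [Finset.mem_filter, Finset.mem_filter] at hp
      refine Equiv.ofBijective (fun i => (⟨p i, ?_⟩ : {x // x ∈ s})) ?_
      · rw [← hp.2]; exact Finset.mem_image_of_mem p (Finset.mem_univ i)
      · refine (Fintype.bijective_iff_injective_and_card _).mpr ⟨?_, by simp [hcard]⟩
        intro a b hab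
        exact hp.1.2 (congrArg Subtype.val hab)
    · intro p hp; exact Finset.mem_univ _
    · intro e _
      rw [Finset.mem_filter, Finset.mem_filter]
      refine ⟨⟨Finset.mem_univ _, fun a b hab => e.injective (Subtype.ext hab)⟩, ?_⟩
      have : Finset.image (fun i => ((e i : {x // x ∈ s}) : Fin n)) Finset.univ
          = Finset.image Subtype.val (Finset.image e Finset.univ) := by
        rw [Finset.image_image]; rfl
      rw [this, Finset.image_univ_equiv e, Finset.univ_eq_attach, Finset.attach_image_val]
    · intro p hp; rfl
    · intro e _
      ext i
      rfl
  rw [hbij, Finset.card_univ,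
    Fintype.card_equiv (Fintype.equivOfCardEq (by simp [hcard]))]
  simp

/-- For |λ_i| < r and k ≤ n,
|(Σ λ_i)^k − k!·e_k(λ)| ≤ k!·(C(n+k-1,n-1) − C(n,k))·r^k. -/
theorem power_sum_minus_esymm_bound (n k : ℕ) (hk : k ≤ n) (r : ℝ)
    (l : Fin n → ℂ) (hl : ∀ i, ‖l i‖ < r) :
    ‖(∑ i, l i) ^ k - (k.factorial : ℂ) *
        ∑ s ∈ Finset.powersetCard k Finset.univ, ∏ i ∈ s, l i‖
      ≤ (k.factorial : ℝ) * (((n + k - 1).choose (n - 1) : ℝ) - (n.choose k : ℝ))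
          * r ^ k := by
  classical
  rcases Nat.eq_zero_or_pos k with hk0 | hk0
  · subst hk0
    simp [Nat.choose_self]
  have hn : 1 ≤ n := hk0.trans_le hk
  have hr : 0 < r := (norm_nonneg _).trans_lt (hl ⟨0, hn⟩)
  rw [Fintype.sum_pow,
    ← Finset.sum_filter_add_sum_filter_not Finset.univ
      (fun p : Fin k → Fin n => Function.Injective p) (fun p => ∏ i, l (p i)),
    sum_injective_eq_factorial_mul_esymm, add_sub_cancel_left]
  set B := Finset.univ.filter (fun p : Fin k → Fin n => ¬ Function.Injective p) with hB
  have hBcard : B.card = n ^ k - n.descFactorial k := by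
    have hA : (Finset.univ.filter
        (fun p : Fin k → Fin n => Function.Injective p)).card = n.descFactorial k := by
      rw [← Fintype.card_subtype]
      rw [Fintype.card_congr (Equiv.subtypeInjectiveEquivEmbedding (Fin k) (Fin n)),
        Fintype.card_embedding_eq]
      simp
    have hcu : (Finset.univ : Finset (Fin k → Fin n)).card = n ^ k := by
      simp [Finset.card_univ]
    rw [hB, Finset.filter_not, Finset.card_sdiff_of_subset (Finset.filter_subset _ _), hA, hcu]
  calc ‖∑ p ∈ B, ∏ i, l (p i)‖
      ≤ ∑ p ∈ B, ‖∏ i, l (p i)‖ := norm_sum_le _ _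
    _ ≤ ∑ _p ∈ B, r ^ k := by
        refine Finset.sum_le_sum fun p _ => ?_
        rw [norm_prod]
        calc ∏ i, ‖l (p i)‖ ≤ ∏ _i : Fin k, r :=
              Finset.prod_le_prod (fun _ _ => norm_nonneg _) (fun i _ => (hl _).le)
          _ = r ^ k := by simp
    _ = (B.card : ℝ) * r ^ k := by rw [Finset.sum_const, nsmul_eq_mul]
    _ ≤ (k.factorial : ℝ) * (((n + k - 1).choose (n - 1) : ℝ) - (n.choose k : ℝ)) * r ^ k := by
        refine mul_le_mul_of_nonneg_right ?_ (by positivity)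
        have hd : n.descFactorial k ≤ n ^ k := Nat.descFactorial_le_pow n k
        have hp : n ^ k ≤ n.ascFactorial k := Nat.pow_succ_le_ascFactorial n k
        have hsymm : (n + k - 1).choose (n - 1) = (n + k - 1).choose k := by
          have h1 : k ≤ n + k - 1 := by omega
          have h2 : n + k - 1 - k = n - 1 := by omega
          rw [← h2, Nat.choose_symm h1]
        have hasc : k.factorial * (n + k - 1).choose k = n.ascFactorial k :=
          (Nat.ascFactorial_eq_factorial_mul_choose' n k).symm
        have hdesc : k.factorial * n.choose k = n.descFactorial k :=
          (Nat.descFactorial_eq_factorial_mul_choose n k).symm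
        rw [hBcard, hsymm]
        calc ((n ^ k - n.descFactorial k : ℕ) : ℝ)
            ≤ ((n.ascFactorial k - n.descFactorial k : ℕ) : ℝ) := by
              exact_mod_cast Nat.sub_le_sub_right hp _
          _ = (k.factorial : ℝ) * (((n + k - 1).choose k : ℝ) - (n.choose k : ℝ)) := by
              rw [Nat.cast_sub (hd.trans hp), ← hasc, ← hdesc]
              push_cast
              ring
end

section
/- Let X be a metric ℂ-vector space of complex-valued functions on D(0,r) containing the polynomials, with polynomials dense and point evaluations at all |w| < r continuous. Let T : X → Hol(𝔻) be a continuous linear map such that (T((z − α)^n))(ζ) ≠ 0 for all n ≥ 0, all α with |α| ≥ r, and all ζ ∈ 𝔻. Then there exist holomorphic functions φ : 𝔻 → D(0,r) and ψ : 𝔻 → ℂ∖{0} such that Tf = ψ·(f ∘ φ) for all f ∈ X. -/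
/-! Fix `ζ ∈ 𝔻` and let `L p = T(p)(ζ)` on polynomials, `c = L 1`, `φ = L X / c` and
`b k = L ((X - φ)^k)`. The hypothesis with `n = 0` and `n = 1` gives `c ≠ 0`, `b 1 = 0` and
`|φ| < r`. The polynomial `β ↦ L ((X - φ + β)^m) = ∑ₖ (m choose k) b k β^(m-k)` has leading
coefficient `c`, and the hypothesis confines its roots to `|β| ≤ |φ| + r`. If `b j = 0` for
`0 < j < n`, Vieta and Newton's identities make its `n`-th power sum of roots equal to
`± n (m choose n) b n / c`, of modulus at most `m (|φ| + r)^n`; as `n (m choose n) / m → ∞` for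
`n ≥ 2`, this forces `b n = 0`. Hence `L p = c · p(φ)`, and density of the polynomials and
continuity of both sides give `T f (ζ) = ψ(ζ) f(φ(ζ))` on all of `X`. -/

open Polynomial Metric

theorem Nat.add_one_le_add_choose (M : ℕ) {k : ℕ} (hk : 1 ≤ k) : M + 1 ≤ (M + k).choose k := by
  calc M + 1 = (M + 1).choose M := by simp
    _ ≤ (M + k).choose M := Nat.choose_le_choose M (by omega)
    _ = (M + k).choose k := Nat.choose_symm_add

namespace Multiset

theorem sum_map_pow_eq_of_esymm_eq_zero_s11 {R : Type*} [CommRing R] (s : Multiset R) {n : ℕ}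
    (hn : 0 < n) (h : ∀ j, 0 < j → j < n → s.esymm j = 0) :
    (s.map (· ^ n)).sum = (-1) ^ (n + 1) * n * s.esymm n := by
  obtain ⟨l, rfl⟩ : ∃ l : List R, (l : Multiset R) = s := ⟨s.toList, s.coe_toList⟩
  have hl : (Finset.univ.val.map l.get : Multiset R) = l := by
    rw [Fin.univ_val_map, List.ofFn_get]
  have newton := congrArg (MvPolynomial.aeval l.get)
    (MvPolynomial.psum_eq_mul_esymm_sub_sum (Fin l.length) R n hn)
  simp only [MvPolynomial.psum, map_sum, map_pow, map_mul, map_sub, MvPolynomial.aeval_X,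
    MvPolynomial.aeval_esymm_eq_multiset_esymm, map_neg, map_one, map_natCast, hl] at newton
  have mixed_terms : ∑ a ∈ Finset.HasAntidiagonal.antidiagonal n with a.1 ∈ Set.Ioo 0 n,
      (-1) ^ a.1 * (l : Multiset R).esymm a.1 * ∑ i, l.get i ^ a.2 = 0 :=
    Finset.sum_eq_zero fun a ha => by
      obtain ⟨ha₀, han⟩ := (Finset.mem_filter.1 ha).2
      rw [h a.1 ha₀ han, mul_zero, zero_mul]
  rw [mixed_terms, sub_zero] at newton
  rw [← newton, Finset.sum, ← hl, Multiset.map_map]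
  rfl

theorem norm_sum_map_pow_le_s11 {𝕜 : Type*} [NormedDivisionRing 𝕜] (s : Multiset 𝕜) (n : ℕ) {R : ℝ}
    (h : ∀ x ∈ s, ‖x‖ ≤ R) : ‖(s.map (· ^ n)).sum‖ ≤ card s * R ^ n := by
  refine (norm_multiset_sum_le _).trans ?_
  rw [Multiset.map_map, ← nsmul_eq_mul, ← Multiset.card_map (norm ∘ (· ^ n))]
  refine Multiset.sum_le_card_nsmul _ _ fun x hx => ?_
  obtain ⟨y, hy, rfl⟩ := Multiset.mem_map.1 hx
  simpa using pow_le_pow_left₀ (norm_nonneg y) (h y hy) n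

end Multiset

namespace Polynomial

section CommSemiring

variable {R : Type*} [CommSemiring R]

noncomputable def binomialMomentPoly (b : ℕ → R) (m : ℕ) : R[X] :=
  ∑ k ∈ Finset.range (m + 1), C (m.choose k * b k) * X ^ (m - k)

theorem coeff_binomialMomentPoly_sub (b : ℕ → R) {m j : ℕ} (hj : j ≤ m) :
    (binomialMomentPoly b m).coeff (m - j) = m.choose j * b j := by
  rw [binomialMomentPoly, finsetSum_coeff,
    Finset.sum_eq_single_of_mem j (Finset.mem_range.2 (by omega))]
  · rw [coeff_C_mul_X_pow, if_pos rfl]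
  · intro k hk hkj
    rw [coeff_C_mul_X_pow, if_neg (by rw [Finset.mem_range] at hk; omega)]

theorem natDegree_binomialMomentPoly (b : ℕ → R) (hb : b 0 ≠ 0) (m : ℕ) :
    (binomialMomentPoly b m).natDegree = m := by
  refine le_antisymm (natDegree_sum_le_of_forall_le _ _ fun k _ => ?_)
    (le_natDegree_of_ne_zero ?_)
  · exact (natDegree_C_mul_X_pow_le _ _).trans (Nat.sub_le m k)
  · simpa using (coeff_binomialMomentPoly_sub b (Nat.zero_le m)).trans_ne (by simpa using hb)

theorem leadingCoeff_binomialMomentPoly (b : ℕ → R) (hb : b 0 ≠ 0) (m : ℕ) :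
    (binomialMomentPoly b m).leadingCoeff = b 0 := by
  simpa [leadingCoeff, natDegree_binomialMomentPoly b hb] using
    coeff_binomialMomentPoly_sub b (Nat.zero_le m)

end CommSemiring

theorem esymm_roots_binomialMomentPoly {K : Type*} [Field K] [IsAlgClosed K] (b : ℕ → K)
    (hb : b 0 ≠ 0) {m j : ℕ} (hj : j ≤ m) :
    b 0 * (-1) ^ j * (binomialMomentPoly b m).roots.esymm j = m.choose j * b j := by
  have vieta := coeff_eq_esymm_roots_of_splits (IsAlgClosed.splits (binomialMomentPoly b m))
    (k := m - j) (by rw [natDegree_binomialMomentPoly b hb]; omega)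
  rwa [natDegree_binomialMomentPoly b hb, leadingCoeff_binomialMomentPoly b hb,
    Nat.sub_sub_self hj, coeff_binomialMomentPoly_sub b hj, eq_comm] at vieta

theorem norm_mul_choose_mul_le_of_roots_le (b : ℕ → ℂ) (hb : b 0 ≠ 0) {R : ℝ} {m n : ℕ}
    (hroots : ∀ β ∈ (binomialMomentPoly b m).roots, ‖β‖ ≤ R) (hn : 0 < n) (hnm : n ≤ m)
    (hvanish : ∀ j, 0 < j → j < n → b j = 0) :
    n * m.choose n * ‖b n‖ ≤ m * R ^ n * ‖b 0‖ := by
  set s := (binomialMomentPoly b m).roots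
  have hcard : Multiset.card s = m := by
    rw [← natDegree_binomialMomentPoly b hb m]
    exact splits_iff_card_roots.1 (IsAlgClosed.splits _)
  have vieta (j : ℕ) (hj : j ≤ m) : ‖b 0‖ * ‖s.esymm j‖ = m.choose j * ‖b j‖ := by
    simpa using congrArg norm (esymm_roots_binomialMomentPoly b hb hj)
  have hesymm (j : ℕ) (hj₀ : 0 < j) (hjn : j < n) : s.esymm j = 0 := by
    simpa [hvanish j hj₀ hjn, hb] using vieta j (by omega)
  have newton := congrArg norm (s.sum_map_pow_eq_of_esymm_eq_zero_s11 hn hesymm)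
  have power_sum := s.norm_sum_map_pow_le_s11 n hroots
  simp only [norm_mul, norm_pow, norm_neg, norm_one, one_pow, one_mul, Complex.norm_natCast]
    at newton
  rw [newton, hcard] at power_sum
  calc (n : ℝ) * m.choose n * ‖b n‖
      = ‖b 0‖ * (n * ‖s.esymm n‖) := by rw [mul_assoc, ← vieta n hnm]; ring
    _ ≤ ‖b 0‖ * (m * R ^ n) := by gcongr
    _ = m * R ^ n * ‖b 0‖ := by ring

theorem eq_zero_of_roots_binomialMomentPoly_le (b : ℕ → ℂ) (hb0 : b 0 ≠ 0) (hb1 : b 1 = 0)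
    {R : ℝ} (hroots : ∀ m, ∀ β ∈ (binomialMomentPoly b m).roots, ‖β‖ ≤ R) :
    ∀ n, 0 < n → b n = 0 := by
  intro n
  induction n using Nat.strong_induction_on with
  | _ n ih =>
  intro hn
  obtain rfl | ⟨k, rfl⟩ : n = 1 ∨ ∃ k, n = k + 2 := by
    rcases n with _ | _ | k
    exacts [absurd hn (lt_irrefl 0), Or.inl rfl, Or.inr ⟨k, rfl⟩]
  · exact hb1
  have linear_bound (M : ℕ) : (M + 1) * ‖b (k + 2)‖ ≤ R ^ (k + 2) * ‖b 0‖ := by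
    have estimate := norm_mul_choose_mul_le_of_roots_le b hb0 (hroots (M + k + 2)) hn
      (by omega) fun j hj₀ hjn => ih j hjn hj₀
    have absorption : ((M + k + 2 : ℕ) : ℝ) * (M + k + 1).choose (k + 1) =
        (M + k + 2).choose (k + 2) * (k + 2 : ℕ) := by
      exact_mod_cast Nat.add_one_mul_choose_eq (M + k + 1) (k + 1)
    have growth : (M + 1 : ℝ) ≤ (M + k + 1).choose (k + 1) := by
      exact_mod_cast Nat.add_one_le_add_choose M (k := k + 1) (by omega)
    refine le_of_mul_le_mul_left ?_ (by positivity : (0 : ℝ) < (M + k + 2 : ℕ))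
    calc ((M + k + 2 : ℕ) : ℝ) * ((M + 1) * ‖b (k + 2)‖)
        ≤ (M + k + 2 : ℕ) * (M + k + 1).choose (k + 1) * ‖b (k + 2)‖ := by
          rw [← mul_assoc]; gcongr
      _ = (k + 2 : ℕ) * (M + k + 2).choose (k + 2) * ‖b (k + 2)‖ := by
          rw [absorption, mul_comm ((M + k + 2).choose (k + 2) : ℝ)]
      _ ≤ (M + k + 2 : ℕ) * R ^ (k + 2) * ‖b 0‖ := estimate
      _ = _ := by ring
  by_contra hne
  obtain ⟨M, hM⟩ := exists_nat_gt (R ^ (k + 2) * ‖b 0‖ / ‖b (k + 2)‖)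
  rw [div_lt_iff₀ (norm_pos_iff.2 hne)] at hM
  linarith [linear_bound M, norm_nonneg (b (k + 2))]

theorem eval_binomialMomentPoly {R : Type*} [CommRing R] (L : R[X] →ₗ[R] R) (φ β : R) (m : ℕ) :
    (binomialMomentPoly (fun k => L ((X - C φ) ^ k)) m).eval β = L ((X - C (φ - β)) ^ m) := by
  rw [show X - C (φ - β) = (X - C φ) + C β by rw [C_sub]; ring, add_pow, map_sum,
    binomialMomentPoly, eval_finsetSum]
  refine Finset.sum_congr rfl fun k _ => ?_
  have hterm : (X - C φ) ^ k * C β ^ (m - k) * (m.choose k : R[X]) =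
      (β ^ (m - k) * m.choose k) • (X - C φ) ^ k := by
    rw [smul_eq_C_mul, C_mul, C_pow, C_eq_natCast]
    ring
  rw [hterm, map_smul, smul_eq_mul, eval_C_mul, eval_pow, eval_X]
  ring

theorem apply_eq_eval_smul_of_apply_X_sub_C_pow_eq_zero {R M : Type*} [CommRing R]
    [AddCommGroup M] [Module R M] (L : R[X] →ₗ[R] M) {φ : R}
    (h : ∀ k, 0 < k → L ((X - C φ) ^ k) = 0) (p : R[X]) : L p = p.eval φ • L 1 := by
  conv_lhs => rw [← p.sum_taylor_eq φ]
  rw [Polynomial.sum_def, map_sum, Finset.sum_eq_single 0]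
  · rw [← smul_eq_C_mul, map_smul, pow_zero, taylor_coeff_zero]
  · intro k _ hk
    rw [← smul_eq_C_mul, map_smul, h k (Nat.pos_of_ne_zero hk), smul_zero]
  · intro h0
    rw [notMem_support_iff.1 h0, C_0, zero_mul, map_zero]

theorem eq_mul_eval_div_of_apply_X_sub_C_pow_ne_zero {r : ℝ} (L : ℂ[X] →ₗ[ℂ] ℂ)
    (hL : ∀ (n : ℕ) (α : ℂ), r ≤ ‖α‖ → L ((X - C α) ^ n) ≠ 0) :
    L 1 ≠ 0 ∧ ‖L X / L 1‖ < r ∧ ∀ p : ℂ[X], L p = L 1 * p.eval (L X / L 1) := by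
  have hc : L 1 ≠ 0 := by simpa using hL 0 r (by simpa using le_abs_self r)
  set φ := L X / L 1
  set b : ℕ → ℂ := fun k => L ((X - C φ) ^ k)
  have hb1 : b 1 = 0 := by
    simp only [b, pow_one, map_sub]
    rw [← mul_one (C φ), ← smul_eq_C_mul, map_smul, smul_eq_mul, div_mul_cancel₀ _ hc, sub_self]
  have hφ : ‖φ‖ < r := by
    by_contra! h
    exact hL 1 φ h hb1
  have hroots (m : ℕ) (β : ℂ) (hβ : β ∈ (binomialMomentPoly b m).roots) : ‖β‖ ≤ ‖φ‖ + r := by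
    have hzero : L ((X - C (φ - β)) ^ m) = 0 := by
      rw [← eval_binomialMomentPoly]
      exact (mem_roots'.1 hβ).2
    have hnear : ‖φ - β‖ < r := by
      by_contra! h
      exact hL m _ h hzero
    calc ‖β‖ = ‖φ - (φ - β)‖ := by rw [sub_sub_cancel]
      _ ≤ ‖φ‖ + ‖φ - β‖ := norm_sub_le _ _
      _ ≤ ‖φ‖ + r := by linarith
  have hmoments := eq_zero_of_roots_binomialMomentPoly_le b (by simpa [b] using hc) hb1 hroots
  refine ⟨hc, hφ, fun p => ?_⟩
  rw [apply_eq_eval_smul_of_apply_X_sub_C_pow_eq_zero L hmoments p, smul_eq_mul, mul_comm]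

end Polynomial

theorem weighted_composition_general (r : ℝ)
    (E : Type) [AddCommGroup E] [Module ℂ E] [MetricSpace E]
    (ι : E →ₗ[ℂ] ({z : ℂ // ‖z‖ < r} → ℂ))
    (P : Polynomial ℂ →ₗ[ℂ] E)
    (hP : ∀ (p : Polynomial ℂ) (z : {z : ℂ // ‖z‖ < r}), ι (P p) z = p.eval z.1)
    (heval : ∀ w : {z : ℂ // ‖z‖ < r}, Continuous fun f : E => ι f w)
    (hdense : DenseRange P)
    (T : E →ₗ[ℂ] (ℂ → ℂ))
    (hThol : ∀ f : E, DifferentiableOn ℂ (T f) (ball (0 : ℂ) 1))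
    (hTcont : ∀ ζ ∈ ball (0 : ℂ) 1, Continuous fun f : E => T f ζ)
    (hT : ∀ n : ℕ, ∀ α : ℂ, r ≤ ‖α‖ → ∀ ζ ∈ ball (0 : ℂ) 1,
      T (P ((Polynomial.X - Polynomial.C α) ^ n)) ζ ≠ 0) :
    ∃ (φ ψ : ℂ → ℂ), DifferentiableOn ℂ φ (ball (0 : ℂ) 1) ∧
      DifferentiableOn ℂ ψ (ball (0 : ℂ) 1) ∧
      (∀ ζ ∈ ball (0 : ℂ) 1, ψ ζ ≠ 0) ∧
      ∃ hφ : ∀ ζ ∈ ball (0 : ℂ) 1, ‖φ ζ‖ < r,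
        ∀ (f : E) (ζ : ℂ) (hζ : ζ ∈ ball (0 : ℂ) 1),
          T f ζ = ψ ζ * ι f ⟨φ ζ, hφ ζ hζ⟩ := by
  set ψ : ℂ → ℂ := T (P 1)
  set φ : ℂ → ℂ := fun ζ => T (P X) ζ / ψ ζ
  have pointwise (ζ : ℂ) (hζ : ζ ∈ ball (0 : ℂ) 1) :
      ψ ζ ≠ 0 ∧ ‖φ ζ‖ < r ∧ ∀ p : ℂ[X], T (P p) ζ = ψ ζ * p.eval (φ ζ) :=
    eq_mul_eval_div_of_apply_X_sub_C_pow_ne_zero ((LinearMap.proj ζ).comp (T.comp P))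
      fun n α hα => hT n α hα ζ hζ
  have hψ (ζ : ℂ) (hζ : ζ ∈ ball (0 : ℂ) 1) : ψ ζ ≠ 0 := (pointwise ζ hζ).1
  refine ⟨φ, ψ, (hThol _).div (hThol _) hψ, hThol _, hψ, fun ζ hζ => (pointwise ζ hζ).2.1,
    fun f ζ hζ => ?_⟩
  refine congrFun (hdense.equalizer (hTcont ζ hζ) (continuous_const.mul (heval _))
    (funext fun p => ?_)) f
  exact ((pointwise ζ hζ).2.2 p).trans (congrArg (ψ ζ * ·) (hP p ⟨φ ζ, _⟩).symm)

/-- Weighted composition operators: if T maps X continuously into Hol(𝔻) and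
(T(z-α)^n)(ζ) ≠ 0 for all n ≥ 0, |α| ≥ r, ζ ∈ 𝔻, then Tf = ψ·(f∘φ) for
holomorphic φ : 𝔻 → D(0,r) and ψ : 𝔻 → ℂ∖{0}. -/
theorem weighted_composition (r : ℝ) (hr : 0 < r)
    (E : Type) [AddCommGroup E] [Module ℂ E] [MetricSpace E]
    (ι : E →ₗ[ℂ] ({z : ℂ // ‖z‖ < r} → ℂ)) (hι : Function.Injective ι)
    (P : Polynomial ℂ →ₗ[ℂ] E)
    (hP : ∀ (p : Polynomial ℂ) (z : {z : ℂ // ‖z‖ < r}), ι (P p) z = p.eval z.1)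
    (heval : ∀ w : {z : ℂ // ‖z‖ < r}, Continuous fun f : E => ι f w)
    (hdense : DenseRange P)
    (T : E →ₗ[ℂ] (ℂ → ℂ))
    (hThol : ∀ f : E, DifferentiableOn ℂ (T f) (ball (0 : ℂ) 1))
    (hTcont : ∀ ζ ∈ ball (0 : ℂ) 1, Continuous fun f : E => T f ζ)
    (hT : ∀ n : ℕ, ∀ α : ℂ, r ≤ ‖α‖ → ∀ ζ ∈ ball (0 : ℂ) 1,
      T (P ((Polynomial.X - Polynomial.C α) ^ n)) ζ ≠ 0) :
    ∃ (φ ψ : ℂ → ℂ), DifferentiableOn ℂ φ (ball (0 : ℂ) 1) ∧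
      DifferentiableOn ℂ ψ (ball (0 : ℂ) 1) ∧
      (∀ ζ ∈ ball (0 : ℂ) 1, ψ ζ ≠ 0) ∧
      ∃ hφ : ∀ ζ ∈ ball (0 : ℂ) 1, ‖φ ζ‖ < r,
        ∀ (f : E) (ζ : ℂ) (hζ : ζ ∈ ball (0 : ℂ) 1),
          T f ζ = ψ ζ * ι f ⟨φ ζ, hφ ζ hζ⟩ :=
  weighted_composition_general r E ι P hP heval hdense T hThol hTcont hT
end
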